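/- arXiv:2509.22373 — 5 statements merged into one kernel-verified Lean document; each statement's English description precedes it below -/
import Mathlib

section
/- The semi-tensor product of matrices is associative: for matrices A, B, C of arbitrary dimensions, (A ⋉ B) ⋉ C = A ⋉ (B ⋉ C). -/
open Matrix

/-- Row/left component of a lexicographic index in `Fin (a*b)`. -/
def fdiv {a b : ℕ} (k : Fin (a * b)) : Fin a :=
  ⟨(k : ℕ) / b, Nat.div_lt_of_lt_mul (Nat.mul_comm a b ▸ k.isLt)⟩

/-- Right component of a lexicographic index in `Fin (a*b)`. -/
def fmod {a b : ℕ} (k : Fin (a * b)) : Fin b :=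
  ⟨(k : ℕ) % b, Nat.mod_lt _ (Nat.pos_of_ne_zero (by rintro rfl; exact absurd k.isLt (by simp)))⟩

/-- Kronecker product of column vectors (lexicographic order of indices). -/
def vKron {m n : ℕ} (x : Fin m → ℝ) (y : Fin n → ℝ) : Fin (m * n) → ℝ :=
  fun k => x (fdiv k) * y (fmod k)

/-- Kronecker product of matrices, with `Fin`-indexed dimensions. -/
def mKron {m n p q : ℕ} (A : Matrix (Fin m) (Fin n) ℝ) (B : Matrix (Fin p) (Fin q) ℝ) :
    Matrix (Fin (m * p)) (Fin (n * q)) ℝ :=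
  fun i j => A (fdiv i) (fdiv j) * B (fmod i) (fmod j)

/-- Semi-tensor product of matrices: A ⋉ B = (A ⊗ I_{t/n})(B ⊗ I_{t/p}), t = lcm n p. -/
def stp {m n p q : ℕ} (A : Matrix (Fin m) (Fin n) ℝ) (B : Matrix (Fin p) (Fin q) ℝ) :
    Matrix (Fin (m * (Nat.lcm n p / n))) (Fin (q * (Nat.lcm n p / p))) ℝ :=
  mKron A (1 : Matrix (Fin (Nat.lcm n p / n)) (Fin (Nat.lcm n p / n)) ℝ) *
    (Matrix.reindex (finCongr (by
        rw [Nat.mul_div_cancel' (Nat.dvd_lcm_right n p),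
          Nat.mul_div_cancel' (Nat.dvd_lcm_left n p)])) (Equiv.refl _)
      (mKron B (1 : Matrix (Fin (Nat.lcm n p / p)) (Fin (Nat.lcm n p / p)) ℝ)))

/-- The swap matrix W_{[m,n]}: sends x ⊗ y to y ⊗ x. -/
def swapM (m n : ℕ) : Matrix (Fin (n * m)) (Fin (m * n)) ℝ :=
  fun i j => if (i : ℕ) = (fmod j : ℕ) * m + (fdiv j : ℕ) then 1 else 0

/-- Column-stacking vectorization of a matrix. -/
def vecc {m n : ℕ} (A : Matrix (Fin m) (Fin n) ℝ) : Fin (n * m) → ℝ :=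
  fun k => A (fmod k) (fdiv k)

/-- Iterated Kronecker product of column vectors. -/
def kronD : (d : ℕ) → (n : Fin d → ℕ) → ((i : Fin d) → Fin (n i) → ℝ) → Fin (∏ i, n i) → ℝ
  | 0, _, _ => fun _ => 1
  | d + 1, n, x => fun k =>
      vKron (x 0) (kronD d (fun i => n i.succ) (fun i => x i.succ))
        (Fin.cast (by rw [Fin.prod_univ_succ]) k)

/-- Lexicographic encoding of a multi-index into a single natural number. -/
def encode : (d : ℕ) → (n : Fin d → ℕ) → ((i : Fin d) → Fin (n i)) → ℕ
  | 0, _, _ => 0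
  | d + 1, n, f =>
      (f 0 : ℕ) * (∏ i : Fin d, n i.succ) + encode d (fun i => n i.succ) (fun i => f i.succ)

theorem encode_lt : ∀ (d : ℕ) (n : Fin d → ℕ) (f : (i : Fin d) → Fin (n i)),
    encode d n f < ∏ i, n i := by
  intro d
  induction d with
  | zero => intro n f; simp [encode]
  | succ d ih =>
    intro n f
    rw [Fin.prod_univ_succ]
    have h1 := ih (fun i => n i.succ) (fun i => f i.succ)
    have h2 := (f 0).isLt
    calc (f 0 : ℕ) * (∏ i : Fin d, n i.succ)
        + encode d (fun i => n i.succ) (fun i => f i.succ)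
        < (f 0 : ℕ) * (∏ i : Fin d, n i.succ) + (∏ i : Fin d, n i.succ) :=
          Nat.add_lt_add_left h1 _
      _ = ((f 0 : ℕ) + 1) * (∏ i : Fin d, n i.succ) := by ring
      _ ≤ n 0 * (∏ i : Fin d, n i.succ) := Nat.mul_le_mul_right _ h2

/-- The MDA projection map Ξ_i determined by the head multi-index e. -/
def proj (d : ℕ) (n : Fin d → ℕ) (e : (i : Fin d) → Fin (n i)) (i : Fin d)
    (x : Fin (∏ j, n j) → ℝ) : Fin (n i) → ℝ :=
  fun k => x ⟨encode d n (Function.update e i k), encode_lt d n _⟩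

/-- A vector is monic if its first nonzero entry equals 1. -/
def Monic {N : ℕ} (v : Fin N → ℝ) : Prop :=
  ∃ e : Fin N, v e = 1 ∧ ∀ j : Fin N, j < e → v j = 0


/-!
Write `X ⊗ I_c` as the array `(i, j) ↦ [i ≡ j mod c] · X (i / c) (j / c)`. Then
`(A ⋉ B)_{ij} = ∑_k (A ⊗ I_α)_{ik} (B ⊗ I_β)_{kj}`, and since `I_c ⊗ I_g = I_{cg}` one gets
`(A ⋉ B) ⊗ I_g = (A ⊗ I_{αg}) (B ⊗ I_{βg})`. Applying this to the inner product on each side turns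
both `(A ⋉ B) ⋉ C` and `A ⋉ (B ⋉ C)` into a triple product `(A ⊗ I) (B ⊗ I) (C ⊗ I)`, and the
multiplicities of the identity factors agree by `lcm` arithmetic.
-/

open Finset

/- `kronOne M c` is `M ⊗ I_c` as an array indexed by `ℕ × ℕ`, zero outside its shape. Indexing by
`ℕ` avoids casts between `Fin` types whose sizes are equal only propositionally. -/
noncomputable def zeroExtend {m n : ℕ} (M : Matrix (Fin m) (Fin n) ℝ) (i j : ℕ) : ℝ :=
  if h : i < m ∧ j < n then M ⟨i, h.1⟩ ⟨j, h.2⟩ else 0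

noncomputable def kronOne {m n : ℕ} (M : Matrix (Fin m) (Fin n) ℝ) (c i j : ℕ) : ℝ :=
  if i % c = j % c then zeroExtend M (i / c) (j / c) else 0

lemma Nat.mod_mul_eq_mod_mul_iff {i j c d : ℕ} :
    i % (d * c) = j % (d * c) ↔ i % d = j % d ∧ i / d % c = j / d % c := by
  constructor
  · intro h
    exact ⟨by rw [← Nat.mod_mul_right_mod i d c, h, Nat.mod_mul_right_mod],
      by rw [← Nat.mod_mul_right_div_self, h, Nat.mod_mul_right_div_self]⟩
  · rintro ⟨hd, hc⟩
    rw [Nat.mod_mul, Nat.mod_mul, hd, hc]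

lemma Nat.lcm_div_left_pos_iff {a b : ℕ} : 0 < Nat.lcm a b / a ↔ 0 < a ∧ 0 < b := by
  constructor
  · intro h
    have hl : Nat.lcm a b ≠ 0 := fun h0 => by simp [h0] at h
    simp only [ne_eq, Nat.lcm_eq_zero_iff, not_or] at hl
    omega
  · rintro ⟨ha, hb⟩
    exact Nat.div_pos (Nat.le_of_dvd (Nat.lcm_pos ha hb) (Nat.dvd_lcm_left a b)) ha

lemma Nat.lcm_div_right_pos_iff {a b : ℕ} : 0 < Nat.lcm a b / b ↔ 0 < a ∧ 0 < b := by
  rw [Nat.lcm_comm, Nat.lcm_div_left_pos_iff, and_comm]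

lemma sum_range_mul_eq_sum_sum (f : ℕ → ℝ) (a c : ℕ) :
    ∑ k ∈ range (a * c), f k = ∑ x ∈ range a, ∑ y ∈ range c, f (x * c + y) := by
  induction a with
  | zero => simp
  | succ a ih => rw [sum_range_succ, ← ih, Nat.succ_mul, sum_range_add]

lemma kronOne_mul {m n : ℕ} (M : Matrix (Fin m) (Fin n) ℝ) (c d i j : ℕ) :
    kronOne M (c * d) i j = if i % d = j % d then kronOne M c (i / d) (j / d) else 0 := by
  simp only [kronOne, mul_comm c d, Nat.mod_mul_eq_mod_mul_iff, ← Nat.div_div_eq_div_mul]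
  split_ifs <;> tauto

lemma kronOne_eq_zero_of_mul_le_row {m n : ℕ} (M : Matrix (Fin m) (Fin n) ℝ) {c : ℕ} (hc : 0 < c)
    {i : ℕ} (hi : m * c ≤ i) (j : ℕ) : kronOne M c i j = 0 := by
  have : ¬ (i / c < m ∧ j / c < n) := fun h => by
    have := (Nat.div_lt_iff_lt_mul hc).mp h.1; omega
  simp [kronOne, zeroExtend, this]

lemma kronOne_eq_zero_of_mul_le_col {m n : ℕ} (M : Matrix (Fin m) (Fin n) ℝ) {c : ℕ} (hc : 0 < c)
    (i : ℕ) {j : ℕ} (hj : n * c ≤ j) : kronOne M c i j = 0 := by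
  have : ¬ (i / c < m ∧ j / c < n) := fun h => by
    have := (Nat.div_lt_iff_lt_mul hc).mp h.2; omega
  simp [kronOne, zeroExtend, this]

lemma mKron_one_apply {m n c : ℕ} (M : Matrix (Fin m) (Fin n) ℝ)
    (i : Fin (m * c)) (j : Fin (n * c)) :
    mKron M (1 : Matrix (Fin c) (Fin c) ℝ) i j = kronOne M c i j := by
  have hi : (i : ℕ) / c < m := Nat.div_lt_of_lt_mul (lt_of_lt_of_eq i.isLt (mul_comm m c))
  have hj : (j : ℕ) / c < n := Nat.div_lt_of_lt_mul (lt_of_lt_of_eq j.isLt (mul_comm n c))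
  simp [mKron, kronOne, zeroExtend, fdiv, fmod, Matrix.one_apply, Fin.ext_iff, hi, hj]

lemma stp_apply {m n p q : ℕ} (A : Matrix (Fin m) (Fin n) ℝ) (B : Matrix (Fin p) (Fin q) ℝ)
    (i : Fin (m * (Nat.lcm n p / n))) (j : Fin (q * (Nat.lcm n p / p))) :
    stp A B i j = ∑ k ∈ range (Nat.lcm n p),
      kronOne A (Nat.lcm n p / n) i k * kronOne B (Nat.lcm n p / p) k j := by
  -- the product in `stp` elaborates through `CStarMatrix`, so `mul_apply` matches only up to defeq
  erw [stp, Matrix.mul_apply]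
  simp only [Matrix.reindex_apply, Matrix.submatrix_apply, mKron_one_apply, finCongr_symm_apply,
    Equiv.refl_symm, Equiv.refl_apply, Fin.val_cast]
  rw [Fin.sum_univ_eq_sum_range (fun k => kronOne A _ i k * kronOne B _ k j),
    Nat.mul_div_cancel' (Nat.dvd_lcm_left n p)]

lemma sum_kronOne_mul_kronOne {m n p q : ℕ} (X : Matrix (Fin m) (Fin n) ℝ)
    (Y : Matrix (Fin p) (Fin q) ℝ) (b c N : ℕ) {g : ℕ} (hg : 0 < g) (i l : ℕ) :
    ∑ k ∈ range (N * g), kronOne X (b * g) i k * kronOne Y (c * g) k l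
      = if i % g = l % g then ∑ k ∈ range N, kronOne X b (i / g) k * kronOne Y c k (l / g)
        else 0 := by
  have hdiv (x : ℕ) {y : ℕ} (hy : y < g) : (x * g + y) / g = x := by
    rw [mul_comm, Nat.mul_add_div hg, Nat.div_eq_of_lt hy, add_zero]
  have hmod (x : ℕ) {y : ℕ} (hy : y < g) : (x * g + y) % g = y :=
    Nat.mul_add_mod_of_lt hy
  -- Only the block offset `y = i % g` contributes.
  have block (x : ℕ) :
      ∑ y ∈ range g, kronOne X (b * g) i (x * g + y) * kronOne Y (c * g) (x * g + y) l
        = if i % g = l % g then kronOne X b (i / g) x * kronOne Y c x (l / g) else 0 := by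
    have hlt := Nat.mod_lt i hg
    rw [sum_eq_single (i % g)]
    · simp only [kronOne_mul, hmod x hlt, hdiv x hlt]
      split_ifs <;> simp_all
    · intro y hy hne
      rw [kronOne_mul, hmod x (mem_range.mp hy), if_neg (Ne.symm hne), zero_mul]
    · exact fun h => absurd (mem_range.mpr hlt) h
  rw [sum_range_mul_eq_sum_sum, sum_congr rfl (fun x _ => block x)]
  split_ifs <;> simp

lemma zeroExtend_stp {m n p q : ℕ} (A : Matrix (Fin m) (Fin n) ℝ) (B : Matrix (Fin p) (Fin q) ℝ)
    (hn : 0 < n) (hp : 0 < p) (i j : ℕ) :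
    zeroExtend (stp A B) i j = ∑ k ∈ range (Nat.lcm n p),
      kronOne A (Nat.lcm n p / n) i k * kronOne B (Nat.lcm n p / p) k j := by
  by_cases h : i < m * (Nat.lcm n p / n) ∧ j < q * (Nat.lcm n p / p)
  · rw [zeroExtend, dif_pos h, stp_apply]
  · rw [zeroExtend, dif_neg h, eq_comm]
    refine sum_eq_zero fun k _ => ?_
    rcases not_and_or.mp h with hi | hj
    · rw [kronOne_eq_zero_of_mul_le_row A (Nat.lcm_div_left_pos_iff.mpr ⟨hn, hp⟩) (not_lt.mp hi),
        zero_mul]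
    · rw [kronOne_eq_zero_of_mul_le_col B (Nat.lcm_div_right_pos_iff.mpr ⟨hn, hp⟩) _ (not_lt.mp hj),
        mul_zero]

lemma kronOne_stp {m n p q : ℕ} (A : Matrix (Fin m) (Fin n) ℝ) (B : Matrix (Fin p) (Fin q) ℝ)
    (hn : 0 < n) (hp : 0 < p) {g : ℕ} (hg : 0 < g) (i j : ℕ) :
    kronOne (stp A B) g i j = ∑ k ∈ range (Nat.lcm n p * g),
      kronOne A (Nat.lcm n p / n * g) i k * kronOne B (Nat.lcm n p / p * g) k j := by
  rw [sum_kronOne_mul_kronOne _ _ _ _ _ hg, kronOne, zeroExtend_stp A B hn hp]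

lemma stp_assoc_dims {m n p q u v : ℕ} (hm : 0 < m) (hp : 0 < p) (hv : 0 < v)
    (h₁ : m * (Nat.lcm n p / n) * (Nat.lcm (q * (Nat.lcm n p / p)) u / (q * (Nat.lcm n p / p)))
        = m * (Nat.lcm n (p * (Nat.lcm q u / q)) / n))
    (h₂ : v * (Nat.lcm (q * (Nat.lcm n p / p)) u / u)
        = v * (Nat.lcm q u / u) * (Nat.lcm n (p * (Nat.lcm q u / q)) / (p * (Nat.lcm q u / q)))) :
    let L₁ := Nat.lcm n p
    let L₂ := Nat.lcm q u
    let M₁ := Nat.lcm (q * (L₁ / p)) u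
    let M₂ := Nat.lcm n (p * (L₂ / q))
    L₁ * (M₁ / (q * (L₁ / p))) = M₂ ∧
    L₁ / n * (M₁ / (q * (L₁ / p))) = M₂ / n ∧
    L₁ / p * (M₁ / (q * (L₁ / p))) = L₂ / q * (M₂ / (p * (L₂ / q))) ∧
    M₁ / u = L₂ / u * (M₂ / (p * (L₂ / q))) ∧
    M₁ = L₂ * (M₂ / (p * (L₂ / q))) := by
  intro L₁ L₂ M₁ M₂
  have hα : L₁ / n * (M₁ / (q * (L₁ / p))) = M₂ / n :=
    Nat.eq_of_mul_eq_mul_left hm (by rw [← mul_assoc]; exact h₁)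
  have hδ : M₁ / u = L₂ / u * (M₂ / (p * (L₂ / q))) :=
    Nat.eq_of_mul_eq_mul_left hv (by rw [← mul_assoc]; exact h₂)
  have hL₁ : L₁ * (M₁ / (q * (L₁ / p))) = M₂ := calc
    _ = n * (L₁ / n) * (M₁ / (q * (L₁ / p))) := by rw [Nat.mul_div_cancel' (Nat.dvd_lcm_left n p)]
    _ = M₂ := by rw [mul_assoc, hα, Nat.mul_div_cancel' (Nat.dvd_lcm_left _ _)]
  refine ⟨hL₁, hα, Nat.eq_of_mul_eq_mul_left hp ?_, hδ, ?_⟩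
  · calc _ = p * (L₁ / p) * (M₁ / (q * (L₁ / p))) := (mul_assoc _ _ _).symm
      _ = M₂ := by rw [Nat.mul_div_cancel' (Nat.dvd_lcm_right n p), hL₁]
      _ = _ := by rw [← mul_assoc, Nat.mul_div_cancel' (Nat.dvd_lcm_right _ _)]
  · calc M₁ = u * (M₁ / u) := (Nat.mul_div_cancel' (Nat.dvd_lcm_right _ _)).symm
      _ = _ := by rw [hδ, ← mul_assoc, Nat.mul_div_cancel' (Nat.dvd_lcm_right q u)]

/-- The semi-tensor product is associative:
(A ⋉ B) ⋉ C = A ⋉ (B ⋉ C) (up to the identification of the equal dimensions). -/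
theorem stp_assoc (m n p q u v : ℕ)
    (A : Matrix (Fin m) (Fin n) ℝ) (B : Matrix (Fin p) (Fin q) ℝ) (C : Matrix (Fin u) (Fin v) ℝ)
    (h₁ : m * (Nat.lcm n p / n) * (Nat.lcm (q * (Nat.lcm n p / p)) u / (q * (Nat.lcm n p / p)))
        = m * (Nat.lcm n (p * (Nat.lcm q u / q)) / n))
    (h₂ : v * (Nat.lcm (q * (Nat.lcm n p / p)) u / u)
        = v * (Nat.lcm q u / u) * (Nat.lcm n (p * (Nat.lcm q u / q)) / (p * (Nat.lcm q u / q)))) :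
    Matrix.reindex (finCongr h₁) (finCongr h₂) (stp (stp A B) C) = stp A (stp B C) := by
  ext i j
  have hrow := i.pos
  have hcol := j.pos
  simp only [CanonicallyOrderedAdd.mul_pos, Nat.lcm_div_left_pos_iff,
    Nat.lcm_div_right_pos_iff] at hrow hcol
  obtain ⟨hm, hn, hp, hq, hu⟩ := hrow
  obtain ⟨⟨hv, -⟩, -⟩ := hcol
  obtain ⟨hL, hα, hβ, hδ, hM⟩ := stp_assoc_dims hm hp hv h₁ h₂
  rw [Matrix.reindex_apply, Matrix.submatrix_apply, stp_apply, stp_apply]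
  simp only [finCongr_symm_apply, Fin.val_cast]
  simp_rw [kronOne_stp A B hn hp (Nat.lcm_div_left_pos_iff.mpr
      ⟨mul_pos hq (Nat.lcm_div_right_pos_iff.mpr ⟨hn, hp⟩), hu⟩),
    kronOne_stp B C hq hu (Nat.lcm_div_right_pos_iff.mpr
      ⟨hn, mul_pos hp (Nat.lcm_div_left_pos_iff.mpr ⟨hq, hu⟩)⟩)]
  rw [hL, hα, hβ, hδ, hM]
  simp_rw [sum_mul, mul_sum, mul_assoc]
  exact sum_comm
end

section
/- Let 0 ≠ x ∈ ℝ^{n₁⋯n_r} be decomposable as x = x₁ ⊗ ⋯ ⊗ x_r with x_i ∈ ℝ^{n_i}, and let a be the first nonzero entry of x. Then there exists a unique decomposition x = a · (y₁ ⊗ ⋯ ⊗ y_r) where each y_i ∈ ℝ^{n_i} is monic, i.e., the first nonzero entry of each y_i equals 1. -/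
open Matrix

/-! The head index of a Kronecker product of vectors is the lexicographic pair of the head
indices of the factors, and its head value is the product of theirs. Dividing each factor
of `x` by its head value therefore gives a monic decomposition with scalar the head value `a`
of `x`. For uniqueness, the head of `u ⊗ v` with `u`, `v` monic determines the heads of `u`
and `v`, and the slices of `u ⊗ v` through that head are `u` and `v` themselves. -/

section HeadIndex

variable {ι R : Type*} [LinearOrder ι] [Zero R]

def IsHeadIndex (v : ι → R) (e : ι) : Prop :=
  v e ≠ 0 ∧ ∀ j < e, v j = 0

theorem IsHeadIndex.unique {v : ι → R} {e e' : ι} (h : IsHeadIndex v e)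
    (h' : IsHeadIndex v e') : e = e' := by
  rcases lt_trichotomy e e' with hlt | heq | hgt
  · exact absurd (h'.2 e hlt) h.1
  · exact heq
  · exact absurd (h.2 e' hgt) h'.1

theorem exists_isHeadIndex [WellFoundedLT ι] {v : ι → R} (hv : v ≠ 0) :
    ∃ e, IsHeadIndex v e := by
  obtain ⟨i, hi⟩ := Function.ne_iff.1 hv
  obtain ⟨e, he, hmin⟩ := wellFounded_lt.has_min {j | v j ≠ 0} ⟨i, hi⟩
  exact ⟨e, he, fun j hj => not_not.1 fun hvj => hmin j hvj hj⟩

theorem IsHeadIndex.comp_cast {N N' : ℕ} {v : Fin N → R} {e : Fin N} (h : IsHeadIndex v e)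
    (hN : N' = N) : IsHeadIndex (v ∘ Fin.cast hN) (Fin.cast hN.symm e) :=
  ⟨h.1, fun j hj => h.2 _ (by simpa [Fin.lt_def] using hj)⟩

end HeadIndex

theorem IsHeadIndex.monic_inv_smul {N : ℕ} {v : Fin N → ℝ} {e : Fin N} (h : IsHeadIndex v e) :
    Monic ((v e)⁻¹ • v) :=
  ⟨e, inv_mul_cancel₀ h.1, fun j hj => by simp [h.2 j hj]⟩

theorem Monic.exists_isHeadIndex {N : ℕ} {v : Fin N → ℝ} (h : Monic v) :
    ∃ e, IsHeadIndex v e ∧ v e = 1 := by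
  obtain ⟨e, he, hmin⟩ := h
  exact ⟨e, ⟨by simp [he], hmin⟩, he⟩

section Kronecker

variable {m N : ℕ}

theorem lex_lt_of_finProdFinEquiv_lt {i e : Fin m} {j f : Fin N}
    (h : finProdFinEquiv (i, j) < finProdFinEquiv (e, f)) : i < e ∨ i = e ∧ j < f := by
  change (j : ℕ) + N * i < f + N * e at h
  rcases lt_trichotomy i e with hie | rfl | hei
  · exact .inl hie
  · exact .inr ⟨rfl, by omega⟩
  · rw [Fin.lt_def] at hei
    nlinarith [f.isLt]

@[simp]
theorem vKron_finProdFinEquiv (u : Fin m → ℝ) (v : Fin N → ℝ) (i : Fin m) (j : Fin N) :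
    vKron u v (finProdFinEquiv (i, j)) = u i * v j := by
  have h := finProdFinEquiv.symm_apply_apply (i, j)
  simp only [finProdFinEquiv, Equiv.coe_fn_symm_mk, Equiv.coe_fn_mk, Prod.ext_iff] at h
  exact congrArg₂ (u · * v ·) h.1 h.2

theorem IsHeadIndex.vKron {u : Fin m → ℝ} {v : Fin N → ℝ} {e : Fin m} {f : Fin N}
    (hu : IsHeadIndex u e) (hv : IsHeadIndex v f) :
    IsHeadIndex (vKron u v) (finProdFinEquiv (e, f)) := by
  refine ⟨by simp [hu.1, hv.1], fun k hk => ?_⟩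
  obtain ⟨⟨i, j⟩, rfl⟩ := finProdFinEquiv.surjective k
  rw [vKron_finProdFinEquiv]
  rcases lex_lt_of_finProdFinEquiv_lt hk with hi | ⟨-, hj⟩
  · simp [hu.2 i hi]
  · simp [hv.2 j hj]

theorem vKron_injective_of_monic {u u' : Fin m → ℝ} {v v' : Fin N → ℝ}
    (hu : Monic u) (hu' : Monic u') (hv : Monic v) (hv' : Monic v')
    (h : vKron u v = vKron u' v') : u = u' ∧ v = v' := by
  obtain ⟨e, he, hue⟩ := hu.exists_isHeadIndex
  obtain ⟨e', he', hue'⟩ := hu'.exists_isHeadIndex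
  obtain ⟨f, hf, hvf⟩ := hv.exists_isHeadIndex
  obtain ⟨f', hf', hvf'⟩ := hv'.exists_isHeadIndex
  have hhead := (he.vKron hf).unique (h ▸ he'.vKron hf')
  obtain ⟨rfl, rfl⟩ := Prod.ext_iff.1 (finProdFinEquiv.injective hhead)
  constructor
  · funext i
    simpa [hvf, hvf'] using congrFun h (finProdFinEquiv (i, f))
  · funext j
    simpa [hue, hue'] using congrFun h (finProdFinEquiv (e, j))

end Kronecker

theorem kronD_succ {d : ℕ} (n : Fin (d + 1) → ℕ) (y : (i : Fin (d + 1)) → Fin (n i) → ℝ) :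
    kronD (d + 1) n y =
      vKron (y 0) (kronD d (fun i => n i.succ) (fun i => y i.succ)) ∘
        Fin.cast (by rw [Fin.prod_univ_succ]) :=
  rfl

theorem kronD_eq_zero {d : ℕ} {n : Fin d → ℕ} {y : (i : Fin d) → Fin (n i) → ℝ} {i : Fin d}
    (hi : y i = 0) : kronD d n y = 0 := by
  induction d with
  | zero => exact i.elim0
  | succ d ih =>
    rw [kronD_succ]
    funext k
    cases i using Fin.cases with
    | zero => simp [vKron, hi]
    | succ i => simp [vKron, ih (y := fun i => y i.succ) hi]

theorem kronD_smul {d : ℕ} {n : Fin d → ℕ} (c : Fin d → ℝ) (y : (i : Fin d) → Fin (n i) → ℝ) :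
    kronD d n (fun i => c i • y i) = (∏ i, c i) • kronD d n y := by
  induction d with
  | zero => funext k; simp [kronD]
  | succ d ih =>
    rw [kronD_succ, kronD_succ, ih (fun i => c i.succ), Fin.prod_univ_succ c]
    funext k
    simp only [Function.comp_apply, vKron, Pi.smul_apply, smul_eq_mul]
    ring

theorem exists_isHeadIndex_kronD {d : ℕ} {n : Fin d → ℕ} {y : (i : Fin d) → Fin (n i) → ℝ}
    {e : (i : Fin d) → Fin (n i)} (he : ∀ i, IsHeadIndex (y i) (e i)) :
    ∃ k, IsHeadIndex (kronD d n y) k ∧ kronD d n y k = ∏ i, y i (e i) := by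
  induction d with
  | zero =>
    refine ⟨⟨0, by simp⟩, ⟨by simp [kronD], fun j hj => ?_⟩, rfl⟩
    exact absurd (Fin.lt_def.1 hj) (Nat.not_lt_zero _)
  | succ d ih =>
    obtain ⟨k, hk, hkval⟩ := ih (y := fun i => y i.succ) (fun i => he i.succ)
    refine ⟨_, kronD_succ n y ▸ ((he 0).vKron hk).comp_cast _, ?_⟩
    simp [kronD_succ, hkval, Fin.prod_univ_succ]

theorem Monic.kronD {d : ℕ} {n : Fin d → ℕ} {y : (i : Fin d) → Fin (n i) → ℝ}
    (hy : ∀ i, Monic (y i)) : Monic (kronD d n y) := by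
  choose e he hval using fun i => (hy i).exists_isHeadIndex
  obtain ⟨k, hk, hkval⟩ := exists_isHeadIndex_kronD he
  exact ⟨k, by simp [hkval, hval], hk.2⟩

theorem kronD_injective_of_monic {d : ℕ} {n : Fin d → ℕ} {y y' : (i : Fin d) → Fin (n i) → ℝ}
    (hy : ∀ i, Monic (y i)) (hy' : ∀ i, Monic (y' i)) (h : kronD d n y = kronD d n y') :
    y = y' := by
  induction d with
  | zero => funext i; exact i.elim0
  | succ d ih =>
    rw [kronD_succ, kronD_succ] at h
    obtain ⟨h0, htail⟩ := vKron_injective_of_monic (hy 0) (hy' 0)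
      (Monic.kronD fun i => hy i.succ) (Monic.kronD fun i => hy' i.succ)
      ((finCongr (Fin.prod_univ_succ n)).surjective.injective_comp_right h)
    have := ih (fun i => hy i.succ) (fun i => hy' i.succ) htail
    funext i
    cases i using Fin.cases with
    | zero => exact h0
    | succ i => exact congrFun this i

theorem unique_monic_decomposition_general (d : ℕ) (n : Fin d → ℕ)
    (x : Fin (∏ i, n i) → ℝ)
    (hdec : ∃ y : (i : Fin d) → Fin (n i) → ℝ, x = kronD d n y)
    (e : Fin (∏ i, n i)) (a : ℝ) (ha : a ≠ 0)
    (he : x e = a) (hmin : ∀ j : Fin (∏ i, n i), j < e → x j = 0) :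
    ∃! y : (i : Fin d) → Fin (n i) → ℝ,
      (∀ i, Monic (y i)) ∧ x = a • kronD d n y := by
  obtain ⟨y, rfl⟩ := hdec
  have hy : ∀ i, y i ≠ 0 := fun i hi => ha (by rw [← he, kronD_eq_zero hi, Pi.zero_apply])
  choose f hf using fun i => exists_isHeadIndex (hy i)
  obtain ⟨k, hk, hkval⟩ := exists_isHeadIndex_kronD hf
  have hprod : a = ∏ i, y i (f i) := by
    rw [← hkval, ← he, (IsHeadIndex.unique ⟨he ▸ ha, hmin⟩ hk : e = k)]
  set c := fun i => y i (f i)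
  have hmonic : ∀ i, Monic ((c i)⁻¹ • y i) := fun i => (hf i).monic_inv_smul
  have hdecomp : kronD d n y = a • kronD d n (fun i => (c i)⁻¹ • y i) := by
    rw [kronD_smul, smul_smul, hprod, ← Finset.prod_mul_distrib,
      Finset.prod_eq_one fun i _ => mul_inv_cancel₀ (hf i).1, one_smul]
  refine ⟨_, ⟨hmonic, hdecomp⟩, fun z ⟨hz, hzy⟩ => kronD_injective_of_monic hz hmonic ?_⟩
  exact smul_right_injective _ ha (hzy.symm.trans hdecomp)

/-- A nonzero decomposable vector has a unique monic decomposition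
x = a · (y₁ ⊗ ⋯ ⊗ y_r) where a is the head value of x and each yᵢ is monic. -/
theorem unique_monic_decomposition (d : ℕ) (n : Fin d → ℕ)
    (x : Fin (∏ i, n i) → ℝ) (hx : x ≠ 0)
    (hdec : ∃ y : (i : Fin d) → Fin (n i) → ℝ, x = kronD d n y)
    (e : Fin (∏ i, n i)) (a : ℝ) (ha : a ≠ 0)
    (he : x e = a) (hmin : ∀ j : Fin (∏ i, n i), j < e → x j = 0) :
    ∃! y : (i : Fin d) → Fin (n i) → ℝ,
      (∀ i, Monic (y i)) ∧ x = a • kronD d n y :=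
  unique_monic_decomposition_general d n x hdec e a ha he hmin
end

section
/- Let x ∈ ℝ^{n₁⋯n_d} be nonzero with head index e(x) = e and head value a, and let x̃ = a · x₁ ⊗ ⋯ ⊗ x_d where x_i are the monic MDA projections of x/a. Then x̃ has head index e and head value a, and consequently either x − x̃ = 0 or e(x − x̃) > e(x). -/
open Matrix

/-- Decoding a linear index into a multi-index. -/
def decode : (d : ℕ) → (n : Fin d → ℕ) → Fin (∏ i, n i) → (i : Fin d) → Fin (n i)
  | 0, _, _ => fun i => i.elim0
  | d + 1, n, k => fun i =>
      Fin.cases (motive := fun i => Fin (n i))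
        (fdiv (Fin.cast (by rw [Fin.prod_univ_succ]) k))
        (fun j => decode d (fun i => n i.succ)
          (fmod (Fin.cast (by rw [Fin.prod_univ_succ]) k)) j) i

theorem kronD_apply : ∀ (d : ℕ) (n : Fin d → ℕ) (x : (i : Fin d) → Fin (n i) → ℝ)
    (k : Fin (∏ i, n i)), kronD d n x k = ∏ i, x i (decode d n k i) := by
  intro d
  induction d with
  | zero => intro n x k; simp [kronD]
  | succ d ih =>
    intro n x k
    rw [Fin.prod_univ_succ]
    simp only [kronD, vKron, decode, Fin.cases_zero, Fin.cases_succ]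
    rw [ih]

theorem encode_decode : ∀ (d : ℕ) (n : Fin d → ℕ) (k : Fin (∏ i, n i)),
    encode d n (decode d n k) = (k : ℕ) := by
  intro d
  induction d with
  | zero =>
    intro n k
    have : (k : ℕ) < 1 := by simpa using k.isLt
    simp only [encode]; omega
  | succ d ih =>
    intro n k
    simp only [encode, decode, Fin.cases_zero, Fin.cases_succ]
    rw [ih]
    simp only [fdiv, fmod, Fin.coe_cast]
    rw [Nat.mul_comm]
    exact Nat.div_add_mod _ _

/-- Monotonicity: lex-smaller multi-index has smaller encoding. -/
theorem encode_lt_encode : ∀ (d : ℕ) (n : Fin d → ℕ) (f g : (i : Fin d) → Fin (n i))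
    (i : Fin d), (∀ j, j < i → f j = g j) → (f i : ℕ) < (g i : ℕ) →
    encode d n f < encode d n g := by
  intro d
  induction d with
  | zero => intro n f g i; exact i.elim0
  | succ d ih =>
    intro n f g i hpre hi
    induction i using Fin.cases with
    | zero =>
      simp only [encode]
      have h1 := encode_lt d (fun i => n i.succ) (fun i => f i.succ)
      have h2 : ((f 0 : ℕ) + 1) * (∏ i : Fin d, n i.succ) ≤
          (g 0 : ℕ) * (∏ i : Fin d, n i.succ) := Nat.mul_le_mul_right _ hi
      nlinarith [Nat.zero_le (encode d (fun i => n i.succ) (fun i => g i.succ))]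
    | succ i' =>
      have h0 : f 0 = g 0 := hpre 0 (Fin.succ_pos i')
      have htail : encode d (fun i => n i.succ) (fun i => f i.succ) <
          encode d (fun i => n i.succ) (fun i => g i.succ) := by
        apply ih _ _ _ i'
        · intro j hj
          exact hpre j.succ (Fin.succ_lt_succ_iff.mpr hj)
        · exact hi
      simp only [encode, h0]
      omega

/-- Converse: smaller encoding means lex-smaller. -/
theorem lex_of_encode_lt : ∀ (d : ℕ) (n : Fin d → ℕ) (f g : (i : Fin d) → Fin (n i)),
    encode d n f < encode d n g →
    ∃ i : Fin d, (∀ j, j < i → f j = g j) ∧ (f i : ℕ) < (g i : ℕ) := by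
  intro d
  induction d with
  | zero => intro n f g h; simp [encode] at h
  | succ d ih =>
    intro n f g h
    by_cases h0 : (f 0 : ℕ) < (g 0 : ℕ)
    · exact ⟨0, fun j hj => absurd hj (by simp [Fin.lt_def]), h0⟩
    · have hrf := encode_lt d (fun i => n i.succ) (fun i => f i.succ)
      have hrg := encode_lt d (fun i => n i.succ) (fun i => g i.succ)
      simp only [encode] at h
      have heq : (f 0 : ℕ) = (g 0 : ℕ) := by nlinarith
      have htail : encode d (fun i => n i.succ) (fun i => f i.succ) <
          encode d (fun i => n i.succ) (fun i => g i.succ) := by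
        rw [heq] at h; omega
      obtain ⟨i, hpre, hi⟩ := ih _ _ _ htail
      refine ⟨i.succ, ?_, hi⟩
      intro j hj
      induction j using Fin.cases with
      | zero => exact Fin.ext heq
      | succ j' => exact hpre j' (Fin.succ_lt_succ_iff.mp hj)

theorem encode_inj (d : ℕ) (n : Fin d → ℕ) (f g : (i : Fin d) → Fin (n i))
    (h : encode d n f = encode d n g) : f = g := by
  by_contra hne
  have hex : ∃ i, f i ≠ g i := by
    by_contra h'
    push_neg at h'
    exact hne (funext h')
  set S : Finset (Fin d) := Finset.univ.filter (fun i => f i ≠ g i) with hS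
  have hSne : S.Nonempty := by
    obtain ⟨i, hi⟩ := hex
    exact ⟨i, by simp [hS, hi]⟩
  set i := S.min' hSne with hi
  have himem : f i ≠ g i := by
    have := S.min'_mem hSne
    simp [hS] at this
    exact this
  have hpre : ∀ j, j < i → f j = g j := by
    intro j hj
    by_contra hj'
    have : i ≤ j := S.min'_le j (by simp [hS, hj'])
    exact absurd hj (not_lt.mpr this)
  rcases Nat.lt_or_ge (f i : ℕ) (g i : ℕ) with hlt | hge
  · exact absurd h (Nat.ne_of_lt (encode_lt_encode d n f g i hpre hlt))
  · have : (g i : ℕ) < (f i : ℕ) := by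
      rcases Nat.lt_or_ge (g i : ℕ) (f i : ℕ) with h' | h'
      · exact h'
      · exact absurd (Fin.ext (le_antisymm h' hge)) himem
    exact absurd h.symm (Nat.ne_of_lt (encode_lt_encode d n g f i (fun j hj => (hpre j hj).symm) this))

/-- The MDA approximation x̃ = a · (x₁ ⊗ ⋯ ⊗ x_d) has the same head index
and head value as x; consequently x − x̃ = 0 or the head index of x − x̃ is larger than
that of x. -/
theorem mda_approx_head (d : ℕ) (n : Fin d → ℕ) (x : Fin (∏ i, n i) → ℝ)
    (e : (i : Fin d) → Fin (n i)) (a : ℝ) (ha : a ≠ 0)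
    (he : x ⟨encode d n e, encode_lt d n e⟩ = a)
    (hmin : ∀ j : Fin (∏ i, n i), (j : ℕ) < encode d n e → x j = 0) :
    (∀ j : Fin (∏ i, n i), (j : ℕ) < encode d n e →
      (a • kronD d n (fun i => proj d n e i (a⁻¹ • x))) j = 0) ∧
    (a • kronD d n (fun i => proj d n e i (a⁻¹ • x))) ⟨encode d n e, encode_lt d n e⟩ = a ∧
    (x - a • kronD d n (fun i => proj d n e i (a⁻¹ • x)) = 0 ∨
      ∀ j : Fin (∏ i, n i), (j : ℕ) ≤ encode d n e →
        (x - a • kronD d n (fun i => proj d n e i (a⁻¹ • x))) j = 0) := by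
  set v : (i : Fin d) → Fin (n i) → ℝ := fun i => proj d n e i (a⁻¹ • x) with hv
  -- each factor at the head multi-index equals 1
  have hfac_e : ∀ i : Fin d, v i (e i) = 1 := by
    intro i
    simp only [hv, proj, Function.update_eq_self, Pi.smul_apply, smul_eq_mul]
    rw [he]
    exact inv_mul_cancel₀ ha
  -- part 1
  have h1 : ∀ j : Fin (∏ i, n i), (j : ℕ) < encode d n e →
      (a • kronD d n v) j = 0 := by
    intro j hj
    set f := decode d n j with hf
    have hfj : encode d n f = (j : ℕ) := encode_decode d n j
    have hflt : encode d n f < encode d n e := by omega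
    obtain ⟨i, hpre, hi⟩ := lex_of_encode_lt d n f e hflt
    have hzero : v i (f i) = 0 := by
      simp only [hv, proj, Pi.smul_apply, smul_eq_mul]
      have hupd : encode d n (Function.update e i (f i)) < encode d n e := by
        apply encode_lt_encode d n _ e i
        · intro j' hj'
          exact Function.update_of_ne (Fin.ne_of_lt hj') _ _
        · simpa using hi
      rw [hmin _ hupd, mul_zero]
    simp only [Pi.smul_apply, smul_eq_mul, kronD_apply]
    rw [Finset.prod_eq_zero (Finset.mem_univ i) hzero, mul_zero]
  have hde : decode d n ⟨encode d n e, encode_lt d n e⟩ = e := by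
    apply encode_inj d n
    rw [encode_decode]
  have h2 : (a • kronD d n v) ⟨encode d n e, encode_lt d n e⟩ = a := by
    simp only [Pi.smul_apply, smul_eq_mul, kronD_apply, hde, hfac_e]
    simp
  refine ⟨h1, h2, Or.inr ?_⟩
  intro j hj
  rcases Nat.lt_or_ge (j : ℕ) (encode d n e) with hlt | hge
  · simp only [Pi.sub_apply]
    rw [hmin j hlt, h1 j hlt, sub_zero]
  · have : j = ⟨encode d n e, encode_lt d n e⟩ := Fin.ext (le_antisymm hj hge)
    subst this
    simp only [Pi.sub_apply]
    rw [he, h2, sub_self]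
end

section
/- A matrix N ∈ M_{mp×nq} admits a Kronecker product decomposition N = A ⊗ B with A ∈ M_{m×n} and B ∈ M_{p×q} if and only if the vector Ψ^T V_c(N) ∈ ℝ^{mnpq} is Kronecker-decomposable as u ⊗ v with u ∈ ℝ^{mn} and v ∈ ℝ^{pq}, where Ψ = I_n ⊗ W_{[m,q]} ⊗ I_p. -/
open Matrix

/-!
Index the rows of `N` by `(i₁, i₂) ∈ [m] × [p]` and its columns by `(j₁, j₂) ∈ [n] × [q]`.
Then `V_c(N)` lists `N_{(i₁,i₂),(j₁,j₂)}` in the order `(j₁, j₂, i₁, i₂)`, and `Ψᵀ` only swaps the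
middle two factors, so `Ψᵀ V_c(N)` lists the same entries in the order `((j₁, i₁), (j₂, i₂))`.
Hence `Ψᵀ V_c(N) = u ⊗ v` says `N_{(i₁,i₂),(j₁,j₂)} = u_{(j₁,i₁)} v_{(j₂,i₂)}`, which is
`N = A ⊗ B` with `V_c(A) = u` and `V_c(B) = v`.
-/

def fpair {a b : ℕ} (x : Fin a) (y : Fin b) : Fin (a * b) :=
  finProdFinEquiv (x, y)

@[simp] lemma fdiv_fpair {a b : ℕ} (x : Fin a) (y : Fin b) : fdiv (fpair x y) = x :=
  congrArg Prod.fst (finProdFinEquiv.symm_apply_apply (x, y))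

@[simp] lemma fmod_fpair {a b : ℕ} (x : Fin a) (y : Fin b) : fmod (fpair x y) = y :=
  congrArg Prod.snd (finProdFinEquiv.symm_apply_apply (x, y))

@[simp] lemma fpair_inj {a b : ℕ} {x x' : Fin a} {y y' : Fin b} :
    fpair x y = fpair x' y' ↔ x = x' ∧ y = y' := by
  simp [fpair, finProdFinEquiv.apply_eq_iff_eq]

lemma forall_fpair {a b : ℕ} {P : Fin (a * b) → Prop} :
    (∀ k, P k) ↔ ∀ x y, P (fpair x y) :=
  finProdFinEquiv.forall_congr_right.symm.trans Prod.forall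

lemma cast_fpair_assoc {α β γ δ : ℕ} (h : α * ((β * γ) * δ) = (α * β) * (γ * δ))
    (a : Fin α) (b : Fin β) (c : Fin γ) (d : Fin δ) :
    Fin.cast h (fpair a (fpair (fpair b c) d)) = fpair (fpair a b) (fpair c d) :=
  Fin.ext (by simp only [fpair, Fin.val_cast, finProdFinEquiv_apply_val]; ring)

@[simp] lemma vKron_fpair {m n : ℕ} (x : Fin m → ℝ) (y : Fin n → ℝ) (a : Fin m) (b : Fin n) :
    vKron x y (fpair a b) = x a * y b := by
  simp [vKron]

@[simp] lemma mKron_fpair {m n p q : ℕ} (A : Matrix (Fin m) (Fin n) ℝ)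
    (B : Matrix (Fin p) (Fin q) ℝ) (i₁ : Fin m) (i₂ : Fin p) (j₁ : Fin n) (j₂ : Fin q) :
    mKron A B (fpair i₁ i₂) (fpair j₁ j₂) = A i₁ j₁ * B i₂ j₂ := by
  simp [mKron]

@[simp] lemma vecc_fpair {m n : ℕ} (A : Matrix (Fin m) (Fin n) ℝ) (j : Fin n) (i : Fin m) :
    vecc A (fpair j i) = A i j := by
  simp [vecc]

@[simp] lemma swapM_fpair {m n : ℕ} (i : Fin (n * m)) (a : Fin m) (b : Fin n) :
    swapM m n i (fpair a b) = if i = fpair b a then 1 else 0 := by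
  have hval : ((fpair b a : Fin (n * m)) : ℕ) = b * m + a := by
    simp only [fpair, finProdFinEquiv_apply_val]; ring
  simp only [swapM, fdiv_fpair, fmod_fpair, Fin.ext_iff, hval]

lemma transpose_mulVec_apply_of_col_eq_ite {R ι κ : Type*} [NonAssocSemiring R] [Fintype ι]
    [DecidableEq ι] (M : Matrix ι κ R) (x : ι → R) {k : κ} {i₀ : ι}
    (hM : ∀ i, M i k = if i = i₀ then 1 else 0) : (Mᵀ *ᵥ x) k = x i₀ := by
  simp [Matrix.mulVec, dotProduct, hM]

abbrev psi (m n p q : ℕ) : Matrix (Fin (n * ((q * m) * p))) (Fin (n * ((m * q) * p))) ℝ :=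
  mKron (1 : Matrix (Fin n) (Fin n) ℝ) (mKron (swapM m q) (1 : Matrix (Fin p) (Fin p) ℝ))

lemma psi_apply_fpair (m n p q : ℕ) (i : Fin (n * ((q * m) * p)))
    (j₁ : Fin n) (i₁ : Fin m) (j₂ : Fin q) (i₂ : Fin p) :
    psi m n p q i (fpair j₁ (fpair (fpair i₁ j₂) i₂))
      = if i = fpair j₁ (fpair (fpair j₂ i₁) i₂) then 1 else 0 := by
  revert i
  simp only [forall_fpair, mKron_fpair, swapM_fpair, fpair_inj, one_apply,
    ite_zero_mul_ite_zero, mul_one, implies_true]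

lemma psi_transpose_mulVec_vecc_apply (m n p q : ℕ) (N : Matrix (Fin (m * p)) (Fin (n * q)) ℝ)
    (h : n * ((q * m) * p) = (n * q) * (m * p))
    (j₁ : Fin n) (i₁ : Fin m) (j₂ : Fin q) (i₂ : Fin p) :
    ((psi m n p q)ᵀ *ᵥ (fun k => vecc N (Fin.cast h k))) (fpair j₁ (fpair (fpair i₁ j₂) i₂))
      = N (fpair i₁ i₂) (fpair j₁ j₂) := by
  rw [transpose_mulVec_apply_of_col_eq_ite _ _ (psi_apply_fpair m n p q · j₁ i₁ j₂ i₂),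
    cast_fpair_assoc, vecc_fpair]

/-- N ∈ M_{mp×nq} admits a KPD N = A ⊗ B, A ∈ M_{m×n}, B ∈ M_{p×q},
iff Ψᵀ V_c(N) is Kronecker-decomposable as u ⊗ v with u ∈ ℝ^{mn}, v ∈ ℝ^{pq},
where Ψ = I_n ⊗ W_{[m,q]} ⊗ I_p. -/
theorem matrix_kpd_iff_vector_kpd (m n p q : ℕ) (N : Matrix (Fin (m * p)) (Fin (n * q)) ℝ) :
    (∃ (A : Matrix (Fin m) (Fin n) ℝ) (B : Matrix (Fin p) (Fin q) ℝ), N = mKron A B) ↔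
    (∃ (u : Fin (n * m) → ℝ) (v : Fin (q * p) → ℝ),
      (mKron (1 : Matrix (Fin n) (Fin n) ℝ)
          (mKron (swapM m q) (1 : Matrix (Fin p) (Fin p) ℝ)))ᵀ
        *ᵥ (fun k => vecc N (Fin.cast (by ring : n * ((q * m) * p) = (n * q) * (m * p)) k))
      = fun k => vKron u v
          (Fin.cast (by ring : n * ((m * q) * p) = (n * m) * (q * p)) k)) := by
  simp only [funext_iff, forall_fpair, psi_transpose_mulVec_vecc_apply, cast_fpair_assoc,
    vKron_fpair]
  constructor
  · rintro ⟨A, B, rfl⟩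
    exact ⟨vecc A, vecc B, by simp⟩
  · rintro ⟨u, v, H⟩
    refine ⟨of fun i j => u (fpair j i), of fun i j => v (fpair j i), ?_⟩
    ext r c
    revert r c
    simp only [forall_fpair, mKron_fpair, of_apply]
    exact fun i₁ i₂ j₁ j₂ => H j₁ i₁ j₂ i₂
end

section
/- If a matrix N ∈ M_{mp×nq} satisfies N = A₁ ⊗ B₁ = A₂ ⊗ B₂ with A_i ∈ M_{m×n}, B_i ∈ M_{p×q}, and N ≠ 0, then there exists a nonzero scalar μ such that A₂ = μ A₁ and B₂ = (1/μ) B₁. -/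
open Matrix

lemma pair_lt {a b : ℕ} (i : Fin a) (k : Fin b) : (i : ℕ) * b + k < a * b := by
  calc (i : ℕ) * b + k < (i : ℕ) * b + b := Nat.add_lt_add_left k.isLt _
    _ = ((i : ℕ) + 1) * b := by ring
    _ ≤ a * b := Nat.mul_le_mul_right _ i.isLt

lemma fdiv_pair {a b : ℕ} (i : Fin a) (k : Fin b) :
    fdiv (⟨(i : ℕ) * b + k, pair_lt i k⟩ : Fin (a * b)) = i := by
  have hb : 0 < b := k.pos
  ext
  simp [fdiv, Nat.mul_add_div, hb, Nat.div_eq_of_lt k.isLt, mul_comm (i : ℕ) b]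

lemma fmod_pair {a b : ℕ} (i : Fin a) (k : Fin b) :
    fmod (⟨(i : ℕ) * b + k, pair_lt i k⟩ : Fin (a * b)) = k := by
  ext
  simp [fmod, Nat.add_mul_mod_self_left, Nat.mod_eq_of_lt k.isLt, add_comm ((i:ℕ)*b) (k:ℕ)]

/-- Uniqueness of matrix KPD: if N = A₁ ⊗ B₁ = A₂ ⊗ B₂ ≠ 0, then
A₂ = μ A₁ and B₂ = μ⁻¹ B₁ for some nonzero scalar μ. -/
theorem matrix_kpd_unique (m n p q : ℕ) (N : Matrix (Fin (m * p)) (Fin (n * q)) ℝ)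
    (A₁ A₂ : Matrix (Fin m) (Fin n) ℝ) (B₁ B₂ : Matrix (Fin p) (Fin q) ℝ)
    (h₁ : N = mKron A₁ B₁) (h₂ : N = mKron A₂ B₂) (hN : N ≠ 0) :
    ∃ μ : ℝ, μ ≠ 0 ∧ A₂ = μ • A₁ ∧ B₂ = μ⁻¹ • B₁ := by
  have key : ∀ (i : Fin m) (k : Fin p) (j : Fin n) (l : Fin q),
      A₁ i j * B₁ k l = A₂ i j * B₂ k l := by
    intro i k j l
    have := congrFun (congrFun (h₁.symm.trans h₂) ⟨(i : ℕ) * p + k, pair_lt i k⟩)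
      ⟨(j : ℕ) * q + l, pair_lt j l⟩
    simpa [mKron, fdiv_pair, fmod_pair] using this
  obtain ⟨I, J, hIJ⟩ : ∃ I J, N I J ≠ 0 := by
    by_contra h
    push_neg at h
    exact hN (by ext I J; simpa using h I J)
  set i₀ := fdiv I; set k₀ := fmod I; set j₀ := fdiv J; set l₀ := fmod J
  have e1 : A₁ i₀ j₀ * B₁ k₀ l₀ ≠ 0 := by rw [h₁] at hIJ; exact hIJ
  have e2 : A₂ i₀ j₀ * B₂ k₀ l₀ ≠ 0 := by rw [h₂] at hIJ; exact hIJ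
  have ha1 : A₁ i₀ j₀ ≠ 0 := fun h => e1 (by rw [h]; ring)
  have hb1 : B₁ k₀ l₀ ≠ 0 := fun h => e1 (by rw [h]; ring)
  have ha2 : A₂ i₀ j₀ ≠ 0 := fun h => e2 (by rw [h]; ring)
  have hb2 : B₂ k₀ l₀ ≠ 0 := fun h => e2 (by rw [h]; ring)
  refine ⟨A₂ i₀ j₀ / A₁ i₀ j₀, div_ne_zero ha2 ha1, ?_, ?_⟩
  · ext i j
    have ek := key i k₀ j l₀
    have e0 := key i₀ k₀ j₀ l₀
    simp only [Matrix.smul_apply, smul_eq_mul]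
    field_simp
    have hcancel : A₂ i j * A₁ i₀ j₀ * B₂ k₀ l₀ = A₂ i₀ j₀ * A₁ i j * B₂ k₀ l₀ := by
      linear_combination A₁ i j * e0 - A₁ i₀ j₀ * ek
    exact mul_right_cancel₀ hb2 hcancel
  · ext k l
    have ek := key i₀ k j₀ l
    simp only [Matrix.smul_apply, smul_eq_mul]
    rw [inv_div]
    field_simp
    linear_combination -ek
end
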